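/- arXiv:math/0412504 — 2 statements merged into one kernel-verified Lean document; each statement's English description precedes it below -/
import Mathlib

section
/- Let M ⊆ ℝᵐ be a smooth real 2-dimensional submanifold and J a linear complex structure on ℝᵐ (identifying ℝᵐ ≅ ℂ^{m/2}). If at every point p ∈ M the tangent space T_pM is invariant under J, then M is a 1-dimensional complex submanifold of ℂ^{m/2}. -/
open Complex Function Set Metric

lemma aux_bij {n : ℕ} (A : (ℝ × ℝ) →L[ℝ] (Fin n → ℂ))
    (hJ : ∀ w ∈ Set.range ⇑A, Complex.I • w ∈ Set.range ⇑A)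
    {j : Fin n} (hj : A (1, 0) j ≠ 0) :
    Function.Bijective ⇑(((ContinuousLinearMap.proj j : (Fin n → ℂ) →L[ℂ] ℂ).restrictScalars ℝ).comp A) := by
  set B := ((ContinuousLinearMap.proj j : (Fin n → ℂ) →L[ℂ] ℂ).restrictScalars ℝ).comp A with hB
  have hBx : ∀ x, B x = A x j := fun x => rfl
  have hsurj : Function.Surjective ⇑B := by
    intro z
    obtain ⟨u₂, hu₂⟩ := hJ (A (1, 0)) ⟨(1, 0), rfl⟩
    set c := A (1, 0) j
    refine ⟨(z / c).re • ((1 : ℝ), (0 : ℝ)) + (z / c).im • u₂, ?_⟩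
    rw [hBx, map_add, map_smul, map_smul]
    have h2 : A u₂ j = Complex.I * c := by rw [hu₂]; simp; rfl
    simp only [Pi.add_apply, Pi.smul_apply, h2, smul_eq_mul, Complex.real_smul]
    rw [show ((z / c).re : ℂ) * c + ((z / c).im : ℂ) * (Complex.I * c)
        = ((z / c).re + (z / c).im * Complex.I) * c by ring, Complex.re_add_im, div_mul_cancel₀ _ hj]
  have hfr : Module.finrank ℝ (ℝ × ℝ) = Module.finrank ℝ ℂ := by
    simp [Complex.finrank_real_complex]
  exact ⟨(LinearMap.injective_iff_surjective_of_finrank_eq_finrank hfr).2 hsurj, hsurj⟩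

lemma key_local {n : ℕ} {V : Set (ℝ × ℝ)} {φ : ℝ × ℝ → (Fin n → ℂ)} (hVo : IsOpen V)
    (hφ : ContDiffOn ℝ (⊤ : ℕ∞) φ V)
    (hd : ∀ v ∈ V, Function.Injective (fun x => fderiv ℝ φ v x) ∧
      ∀ w : Fin n → ℂ, w ∈ Set.range (fun x => fderiv ℝ φ v x) →
        Complex.I • w ∈ Set.range (fun x => fderiv ℝ φ v x))
    {v : ℝ × ℝ} (hv : v ∈ V) :
    ∃ (c : ℂ) (r : ℝ) (N : Set (ℝ × ℝ)) (ψ : ℂ → (Fin n → ℂ)),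
      0 < r ∧ r ≤ 1 ∧ IsOpen N ∧ v ∈ N ∧ N ⊆ V ∧ ψ '' (ball c r) = φ '' N ∧
      ∀ z ∈ ball c r, DifferentiableAt ℂ ψ z ∧ fderiv ℂ ψ z ≠ 0 := by
  classical
  -- basic differentiability facts
  have hfd : ∀ u ∈ V, HasFDerivAt φ (fderiv ℝ φ u) u := fun u hu =>
    ((hφ.differentiableOn (by simp)).differentiableAt (hVo.mem_nhds hu)).hasFDerivAt
  -- choose coordinate j
  have ht0 : fderiv ℝ φ v (1, 0) ≠ 0 := by
    intro h
    have := (hd v hv).1 (a₁ := ((1 : ℝ), (0 : ℝ))) (a₂ := 0) (by simpa using h)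
    simp at this
  obtain ⟨j, hj⟩ : ∃ j, fderiv ℝ φ v (1, 0) j ≠ 0 := Function.ne_iff.1 ht0
  -- the projection
  set π : (Fin n → ℂ) →L[ℝ] ℂ :=
    ((ContinuousLinearMap.proj j : (Fin n → ℂ) →L[ℂ] ℂ).restrictScalars ℝ) with hπ
  set f : (ℝ × ℝ) → ℂ := fun u => φ u j with hf
  set B : (ℝ × ℝ) → ((ℝ × ℝ) →L[ℝ] ℂ) := fun u => π.comp (fderiv ℝ φ u) with hBdef
  have hff : ∀ u ∈ V, HasFDerivAt f (B u) u := fun u hu =>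
    (π.hasFDerivAt).comp u (hfd u hu)
  -- open set where the derivative's j-th coordinate doesn't vanish
  have hcont : ContinuousOn (fun u => fderiv ℝ φ u (1, 0) j) V := by
    have h1 : ContinuousOn (fderiv ℝ φ) V := hφ.continuousOn_fderiv_of_isOpen hVo (by simp)
    exact ((continuous_apply j).comp
      (ContinuousLinearMap.apply ℝ (Fin n → ℂ) ((1 : ℝ), (0 : ℝ))).continuous).comp_continuousOn h1
  set V₁ : Set (ℝ × ℝ) := V ∩ (fun u => fderiv ℝ φ u (1, 0) j) ⁻¹' ({0}ᶜ) with hV₁def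
  have hV₁o : IsOpen V₁ := hcont.isOpen_inter_preimage hVo isOpen_compl_singleton
  have hvV₁ : v ∈ V₁ := ⟨hv, hj⟩
  have hV₁V : V₁ ⊆ V := Set.inter_subset_left
  -- each point of V₁ gives a linear equivalence
  have hE : ∀ u ∈ V₁, ∃ E : (ℝ × ℝ) ≃L[ℝ] ℂ, (E : (ℝ × ℝ) →L[ℝ] ℂ) = B u := by
    intro u hu
    have hbij : Function.Bijective ⇑(B u) := aux_bij _ (hd u hu.1).2 hu.2
    exact ⟨(LinearEquiv.ofBijective (B u : (ℝ × ℝ) →ₗ[ℝ] ℂ) hbij).toContinuousLinearEquiv,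
      by refine ContinuousLinearMap.ext fun x => rfl⟩
  obtain ⟨E₀, hE₀⟩ := hE v hvV₁
  -- inverse function theorem at v
  have hfat : ContDiffAt ℝ (⊤ : ℕ∞) f v := by
    have : ContDiffAt ℝ (⊤ : ℕ∞) φ v := hφ.contDiffAt (hVo.mem_nhds hv)
    exact (π.contDiff.comp_contDiffAt v this : ContDiffAt ℝ (⊤ : ℕ∞) (⇑π ∘ φ) v)
  have hsf : HasStrictFDerivAt f (E₀ : (ℝ × ℝ) →L[ℝ] ℂ) v :=
    hfat.hasStrictFDerivAt' (by rw [hE₀]; exact hff v hv) (by simp)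
  set P := hsf.toOpenPartialHomeomorph f with hP
  have hPcoe : ⇑P = f := hsf.toOpenPartialHomeomorph_coe
  have hvsrc : v ∈ P.source := hsf.mem_toOpenPartialHomeomorph_source
  have hWo : IsOpen (P.target ∩ P.symm ⁻¹' (V₁ ∩ P.source)) :=
    P.isOpen_inter_preimage_symm (hV₁o.inter P.open_source)
  have hlv : P.symm (f v) = v := by
    have := P.left_inv hvsrc
    rwa [hPcoe] at this
  have hcvW : f v ∈ P.target ∩ P.symm ⁻¹' (V₁ ∩ P.source) := by
    refine ⟨by rw [← hPcoe]; exact P.map_source hvsrc, ?_⟩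
    rw [Set.mem_preimage, hlv]; exact ⟨hvV₁, hvsrc⟩
  obtain ⟨r₀, hr₀, hr₀sub⟩ := Metric.isOpen_iff.1 hWo (f v) hcvW
  set r : ℝ := min r₀ 1 with hr
  have hrpos : 0 < r := lt_min hr₀ one_pos
  have hrsub : ball (f v) r ⊆ P.target ∩ P.symm ⁻¹' (V₁ ∩ P.source) :=
    (ball_subset_ball (min_le_left _ _)).trans hr₀sub
  set N : Set (ℝ × ℝ) := P.symm '' ball (f v) r with hN
  have hNo : IsOpen N :=
    P.isOpen_image_symm_of_subset_target isOpen_ball (hrsub.trans Set.inter_subset_left)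
  have hvN : v ∈ N := ⟨f v, mem_ball_self hrpos, hlv⟩
  have hNV₁ : N ⊆ V₁ := by
    rintro _ ⟨z, hz, rfl⟩
    exact ((hrsub hz).2 : _ ∈ V₁ ∩ P.source).1
  refine ⟨f v, r, N, φ ∘ P.symm, hrpos, min_le_right _ _, hNo, hvN, hNV₁.trans hV₁V,
    (Set.image_comp φ P.symm _), ?_⟩
  intro z hz
  have hzW := hrsub hz
  have hzt : z ∈ P.target := hzW.1
  have huV₁ : P.symm z ∈ V₁ := (hzW.2 : _ ∈ V₁ ∩ P.source).1
  have huV : P.symm z ∈ V := hV₁V huV₁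
  obtain ⟨E, hEe⟩ := hE (P.symm z) huV₁
  have hfu : HasFDerivAt f (E : (ℝ × ℝ) →L[ℝ] ℂ) (P.symm z) := by
    rw [hEe]; exact hff _ huV
  have hsymm : HasFDerivAt P.symm (E.symm : ℂ →L[ℝ] (ℝ × ℝ)) z :=
    P.hasFDerivAt_symm hzt (by rw [hPcoe]; exact hfu)
  set A := fderiv ℝ φ (P.symm z) with hA
  have hφu : HasFDerivAt φ A (P.symm z) := hfd _ huV
  have hψz : HasFDerivAt (φ ∘ P.symm) (A.comp (E.symm : ℂ →L[ℝ] (ℝ × ℝ))) z :=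
    hφu.comp z hsymm
  set L : ℂ →L[ℝ] (Fin n → ℂ) := A.comp (E.symm : ℂ →L[ℝ] (ℝ × ℝ)) with hL
  have hEapp : ∀ x, E x = A x j := by
    intro x
    have : (E : (ℝ × ℝ) →L[ℝ] ℂ) x = B (P.symm z) x := by rw [hEe]
    exact this
  have hAinj : Function.Injective ⇑A := (hd _ huV).1
  -- L I = I • L 1
  have hLI : L Complex.I = Complex.I • L 1 := by
    have h1 : L 1 = A (E.symm 1) := rfl
    obtain ⟨y, hy⟩ := (hd _ huV).2 (L 1) ⟨E.symm 1, rfl⟩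
    have hyj : A y j = Complex.I := by
      have : A y = Complex.I • L 1 := hy
      rw [this, h1]
      have : A (E.symm 1) j = E (E.symm 1) := (hEapp _).symm
      simp only [Pi.smul_apply, smul_eq_mul, this, E.apply_symm_apply, mul_one]
    have hEy : E y = E (E.symm Complex.I) := by
      rw [hEapp y, hyj, E.apply_symm_apply]
    have : y = E.symm Complex.I := E.injective hEy
    calc L Complex.I = A (E.symm Complex.I) := rfl
      _ = A y := by rw [this]
      _ = Complex.I • L 1 := hy
  set w₀ : Fin n → ℂ := L 1 with hw₀def
  have hw₀ : w₀ ≠ 0 := by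
    intro h0
    have h1 : E.symm 1 ≠ 0 := by
      intro h
      have := congrArg E h
      rw [E.apply_symm_apply, map_zero] at this
      exact one_ne_zero this
    exact h1 (hAinj (by rw [show A (E.symm 1) = w₀ from rfl, h0, map_zero]))
  set L' : ℂ →L[ℂ] (Fin n → ℂ) := (ContinuousLinearMap.id ℂ ℂ).smulRight w₀ with hL'
  have hres : L'.restrictScalars ℝ = L := by
    refine ContinuousLinearMap.ext fun x => ?_
    have hdecomp : (x.re : ℝ) • (1 : ℂ) + (x.im : ℝ) • Complex.I = x := by
      simp [Complex.real_smul, Complex.re_add_im]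
    have hLx : L x = x.re • L 1 + x.im • L Complex.I := by
      rw [← map_smul, ← map_smul, ← map_add, hdecomp]
    show L' x = L x
    rw [hLx, hLI]
    funext i
    simp only [hL', ContinuousLinearMap.smulRight_apply, ContinuousLinearMap.id_apply,
      Pi.smul_apply, Pi.add_apply, smul_eq_mul, Complex.real_smul]
    linear_combination -(w₀ i) * (Complex.re_add_im x)
  have hC : HasFDerivAt (𝕜 := ℂ) (φ ∘ P.symm) L' z :=
    hasFDerivAt_of_restrictScalars ℝ hψz hres
  refine ⟨hC.differentiableAt, ?_⟩
  rw [hC.fderiv]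
  intro h0
  apply hw₀
  have := congrArg (fun (T : ℂ →L[ℂ] (Fin n → ℂ)) => T 1) h0
  simpa [hL'] using this



/-- A smooth real 2-dimensional submanifold `M ⊆ ℂⁿ` (locally the image of a smooth
immersive parametrization by an open subset of `ℝ² ≅ ℝ × ℝ`) whose tangent spaces are
invariant under the standard complex structure `J` (multiplication by `i`) is a
1-dimensional complex submanifold: it admits local holomorphic immersive
parametrizations by open subsets of `ℂ`. -/
theorem stmt_16 {n : ℕ} (M : Set (Fin n → ℂ))
    (hM : ∀ p ∈ M, ∃ U : Set (Fin n → ℂ), IsOpen U ∧ p ∈ U ∧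
      ∃ (V : Set (ℝ × ℝ)) (φ : ℝ × ℝ → (Fin n → ℂ)), IsOpen V ∧
        ContDiffOn ℝ (⊤ : ℕ∞) φ V ∧ φ '' V = M ∩ U ∧
        ∀ v ∈ V,
          Function.Injective (fun x => fderiv ℝ φ v x) ∧
          ∀ w : Fin n → ℂ, w ∈ Set.range (fun x => fderiv ℝ φ v x) →
            Complex.I • w ∈ Set.range (fun x => fderiv ℝ φ v x)) :
    ∀ p ∈ M, ∃ U : Set (Fin n → ℂ), IsOpen U ∧ p ∈ U ∧
      ∃ (V : Set ℂ) (ψ : ℂ → (Fin n → ℂ)), IsOpen V ∧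
        DifferentiableOn ℂ ψ V ∧ ψ '' V = M ∩ U ∧
        ∀ v ∈ V, fderiv ℂ ψ v ≠ 0 := by
  classical
  intro p hp
  obtain ⟨U, hUo, hpU, V, φ, hVo, hφ, himg, hder⟩ := hM p hp
  have hpMU : p ∈ M ∩ U := ⟨hp, hpU⟩
  obtain ⟨v₀, hv₀, -⟩ : ∃ v₀ ∈ V, φ v₀ = p := by
    rw [← himg] at hpMU; exact hpMU
  -- local data at every point of V
  have H : ∀ i : {v // v ∈ V}, ∃ (c : ℂ) (r : ℝ) (N : Set (ℝ × ℝ)) (ψ : ℂ → (Fin n → ℂ)),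
      0 < r ∧ r ≤ 1 ∧ IsOpen N ∧ (i : ℝ × ℝ) ∈ N ∧ N ⊆ V ∧ ψ '' (ball c r) = φ '' N ∧
      ∀ z ∈ ball c r, DifferentiableAt ℂ ψ z ∧ fderiv ℂ ψ z ≠ 0 :=
    fun i => key_local hVo hφ hder i.2
  choose c r N ψ hr0 hr1 hNo hvN hNV himgN hdiff using H
  obtain ⟨T, hTc, hTU⟩ := TopologicalSpace.isOpen_iUnion_countable N hNo
  have hUnion : ⋃ i, N i = V := by
    refine subset_antisymm (Set.iUnion_subset fun i => hNV i) fun v hv => ?_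
    exact Set.mem_iUnion.2 ⟨⟨v, hv⟩, hvN _⟩
  have hTne : T.Nonempty := by
    have : v₀ ∈ ⋃ i ∈ T, N i := by rw [hTU, hUnion]; exact hv₀
    obtain ⟨i, hi, -⟩ := Set.mem_iUnion₂.1 this
    exact ⟨i, hi⟩
  obtain ⟨g, hgT⟩ := hTc.exists_eq_range hTne
  have hcover : ⋃ k, N (g k) = V := by
    have : ⋃ i ∈ T, N i = ⋃ k, N (g k) := by rw [hgT, Set.biUnion_range]
    rw [← this, hTU, hUnion]
  -- disjoint disks in ℂ
  set ctr : ℕ → ℂ := fun k => ((4 * k : ℝ) : ℂ) with hctr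
  set D : ℕ → Set ℂ := fun k => ball (ctr k) (r (g k)) with hD
  have huniq : ∀ z k m, z ∈ D k → z ∈ D m → k = m := by
    intro z k m hk hm
    by_contra hne
    have h1 : (1 : ℝ) ≤ |(k : ℝ) - (m : ℝ)| := by
      have h1' : ((k : ℤ) - m) ≠ 0 := sub_ne_zero.2 (by exact_mod_cast hne)
      have := Int.one_le_abs h1'
      calc (1 : ℝ) ≤ ((|(k : ℤ) - (m : ℤ)| : ℤ) : ℝ) := by exact_mod_cast this
        _ = |(k : ℝ) - (m : ℝ)| := by push_cast; rfl
    have hdist : dist (ctr k) (ctr m) ≥ 4 := by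
      rw [hctr]
      simp only []
      rw [Complex.isometry_ofReal.dist_eq, Real.dist_eq]
      have : |4 * (k : ℝ) - 4 * m| = 4 * |(k : ℝ) - m| := by
        rw [show 4 * (k : ℝ) - 4 * m = 4 * ((k : ℝ) - m) by ring, abs_mul]
        norm_num
      rw [this]; linarith
    have h2 : dist (ctr k) (ctr m) < 2 := by
      calc dist (ctr k) (ctr m) ≤ dist (ctr k) z + dist z (ctr m) := dist_triangle _ _ _
        _ < r (g k) + r (g m) := by
            rw [dist_comm (ctr k) z]
            exact add_lt_add (mem_ball.1 hk) (mem_ball.1 hm)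
        _ ≤ 2 := by have := hr1 (g k); have := hr1 (g m); linarith
    linarith
  set Ψ : ℂ → (Fin n → ℂ) := fun z =>
    if h : ∃ k, z ∈ D k then ψ (g h.choose) (z - ctr h.choose + c (g h.choose)) else 0 with hΨ
  have hΨeq : ∀ k, ∀ z ∈ D k, Ψ z = ψ (g k) (z - ctr k + c (g k)) := by
    intro k z hz
    have hex : ∃ m, z ∈ D m := ⟨k, hz⟩
    have : hex.choose = k := huniq z _ _ hex.choose_spec hz
    rw [hΨ]; simp only [dif_pos hex, this]
  have hmemball : ∀ k, ∀ z ∈ D k, z - ctr k + c (g k) ∈ ball (c (g k)) (r (g k)) := by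
    intro k z hz
    rw [mem_ball] at hz ⊢
    rw [Complex.dist_eq] at hz ⊢
    convert hz using 2
    ring
  -- per-point differentiability
  have hkey : ∀ k, ∀ z₀ ∈ D k, DifferentiableAt ℂ Ψ z₀ ∧ fderiv ℂ Ψ z₀ ≠ 0 := by
    intro k z₀ hz₀
    set w := z₀ - ctr k + c (g k) with hw
    have hwball := hmemball k z₀ hz₀
    have hψw := hdiff (g k) w hwball
    have htr : HasFDerivAt (fun z : ℂ => z - ctr k + c (g k))
        (ContinuousLinearMap.id ℂ ℂ) z₀ := by
      simpa using ((hasFDerivAt_id z₀).sub_const (ctr k)).add_const (c (g k))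
    have hcomp : HasFDerivAt (fun z : ℂ => ψ (g k) (z - ctr k + c (g k)))
        (fderiv ℂ (ψ (g k)) w) z₀ := by
      have := (hψw.1.hasFDerivAt).comp z₀ htr
      simpa using this
    have hev : Ψ =ᶠ[nhds z₀] fun z : ℂ => ψ (g k) (z - ctr k + c (g k)) :=
      Filter.eventuallyEq_of_mem ((isOpen_ball).mem_nhds hz₀) (hΨeq k)
    refine ⟨hcomp.differentiableAt.congr_of_eventuallyEq hev, ?_⟩
    rw [hev.fderiv_eq, hcomp.fderiv]
    exact hψw.2
  refine ⟨U, hUo, hpU, ⋃ k, D k, Ψ, isOpen_iUnion fun k => isOpen_ball, ?_, ?_, ?_⟩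
  · intro z hz
    obtain ⟨k, hk⟩ := Set.mem_iUnion.1 hz
    exact ((hkey k z hk).1).differentiableWithinAt
  · rw [Set.image_iUnion]
    have himgD : ∀ k, Ψ '' D k = φ '' N (g k) := by
      intro k
      rw [← himgN (g k)]
      ext w'
      constructor
      · rintro ⟨z, hz, rfl⟩
        rw [hΨeq k z hz]
        exact ⟨z - ctr k + c (g k), hmemball k z hz, rfl⟩
      · rintro ⟨y, hy, rfl⟩
        have hyD : y - c (g k) + ctr k ∈ D k := by
          show _ ∈ ball (ctr k) (r (g k))
          rw [mem_ball, Complex.dist_eq] at hy ⊢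
          convert hy using 2
          ring
        refine ⟨y - c (g k) + ctr k, hyD, ?_⟩
        rw [hΨeq k _ hyD]
        congr 1
        ring
    calc ⋃ k, Ψ '' D k = ⋃ k, φ '' N (g k) := by simp only [himgD]
      _ = φ '' ⋃ k, N (g k) := (Set.image_iUnion).symm
      _ = φ '' V := by rw [hcover]
      _ = M ∩ U := himg
  · intro z hz
    obtain ⟨k, hk⟩ := Set.mem_iUnion.1 hz
    exact (hkey k z hk).2
end

section
/- Let X₁, …, X_{n−1} be smooth vector fields of type (1,0) tangent to a smooth real hypersurface S ⊆ ℂⁿ that diagonalize the Levi form of S near a point P, and let M ⊆ S be a subset on which L(X₁, X̄₁) = 0. Write [X₁, X̄₁] = Y − Ȳ + φ(L_n − L̄_n) with Y complex tangential of type (1,0), L_n the complex normal, and φ smooth, φ ≥ 0 (by pseudoconvexity), φ = 0 on M. Then at every point of M where φ vanishes to first order, the Jacobi identity applied to X₁, X̄₁, X_k (k ≥ 2) shows that [Ȳ, X_k] is complex tangential on M, hence Y lies in the nullspace of the Levi form on M and is a multiple of X₁ there. -/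
open scoped ComplexConjugate

variable {n : ℕ}

/-- Wirtinger derivative `∂f/∂z_j = ½(∂f/∂x_j − i ∂f/∂y_j)`. -/
noncomputable def wirtingerZ (f : (Fin n → ℂ) → ℂ) (j : Fin n) (z : Fin n → ℂ) : ℂ :=
  (1 / 2) * (fderiv ℝ f z (Pi.single j 1) - Complex.I * fderiv ℝ f z (Pi.single j Complex.I))

/-- Wirtinger derivative `∂f/∂z̄_j = ½(∂f/∂x_j + i ∂f/∂y_j)`. -/
noncomputable def wirtingerZbar (f : (Fin n → ℂ) → ℂ) (j : Fin n) (z : Fin n → ℂ) : ℂ :=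
  (1 / 2) * (fderiv ℝ f z (Pi.single j 1) + Complex.I * fderiv ℝ f z (Pi.single j Complex.I))

/-- A complex vector field `Σ a_j ∂/∂z_j + Σ b_j ∂/∂z̄_j` is encoded by the pair of
coefficient functions `(a, b)`.  Its action on a function. -/
noncomputable def vfAct (W : (Fin n → ℂ) → (Fin n → ℂ) × (Fin n → ℂ))
    (f : (Fin n → ℂ) → ℂ) (z : Fin n → ℂ) : ℂ :=
  (∑ j, (W z).1 j * wirtingerZ f j z) + ∑ j, (W z).2 j * wirtingerZbar f j z

/-- Lie bracket of complex vector fields, computed coefficientwise. -/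
noncomputable def vfBracket (W W' : (Fin n → ℂ) → (Fin n → ℂ) × (Fin n → ℂ))
    (z : Fin n → ℂ) : (Fin n → ℂ) × (Fin n → ℂ) :=
  (fun j => vfAct W (fun w => (W' w).1 j) z - vfAct W' (fun w => (W w).1 j) z,
   fun j => vfAct W (fun w => (W' w).2 j) z - vfAct W' (fun w => (W w).2 j) z)

/-- The `(1,0)` field with coefficients `X` and the conjugate `(0,1)` field. -/
def oneZero (X : (Fin n → ℂ) → (Fin n → ℂ)) : (Fin n → ℂ) → (Fin n → ℂ) × (Fin n → ℂ) :=
  fun z => (X z, 0)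

def zeroOne (X : (Fin n → ℂ) → (Fin n → ℂ)) : (Fin n → ℂ) → (Fin n → ℂ) × (Fin n → ℂ) :=
  fun z => (0, fun j => conj (X z j))

/-- The Levi form `L(X,Ȳ) = Σ_{j,k} (∂²ρ/∂z_j∂z̄_k) X_j Ȳ_k` of the defining
function `ρ`. -/
noncomputable def leviForm (ρ : (Fin n → ℂ) → ℝ) (X Y : (Fin n → ℂ) → (Fin n → ℂ))
    (z : Fin n → ℂ) : ℂ :=
  ∑ j, ∑ k, wirtingerZbar (fun w => wirtingerZ (fun u => (ρ u : ℂ)) j w) k z *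
    X z j * conj (Y z k)

/-- `X` is complex tangential to `{ρ = 0}` at `z`: `Σ_j X_j ∂ρ/∂z_j = 0`. -/
noncomputable def isTangential (ρ : (Fin n → ℂ) → ℝ) (X : (Fin n → ℂ) → (Fin n → ℂ))
    (z : Fin n → ℂ) : Prop :=
  ∑ j, X z j * wirtingerZ (fun u => (ρ u : ℂ)) j z = 0

noncomputable def dW (f : (Fin n → ℂ) → ℂ) (z a : Fin n → ℂ) : ℂ :=
  (1 / 2) * (fderiv ℝ f z a - Complex.I * fderiv ℝ f z (Complex.I • a))

noncomputable def dWb (f : (Fin n → ℂ) → ℂ) (z a : Fin n → ℂ) : ℂ :=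
  (1 / 2) * (fderiv ℝ f z a + Complex.I * fderiv ℝ f z (Complex.I • a))

section AuxLemmas

variable {U : Set (Fin n → ℂ)} {z a b u v : Fin n → ℂ} {f g : (Fin n → ℂ) → ℂ}
  {A : (Fin n → ℂ) → (Fin n → ℂ)} {ρ φ : (Fin n → ℂ) → ℝ}

lemma smulC_decomp (c : ℂ) (a : Fin n → ℂ) :
    c • a = (c.re : ℝ) • a + (c.im : ℝ) • (Complex.I • a) := by
  funext j
  simp only [Pi.smul_apply, Pi.add_apply, Complex.real_smul, smul_eq_mul]
  conv_lhs => rw [← Complex.re_add_im c]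
  ring

lemma clm_smulC (L : (Fin n → ℂ) →L[ℝ] ℂ) (c : ℂ) (a : Fin n → ℂ) :
    L (c • a) = c.re • L a + c.im • L (Complex.I • a) := by
  rw [smulC_decomp c a, map_add, map_smul, map_smul]

lemma I_smul_I_smul (a : Fin n → ℂ) : Complex.I • Complex.I • a = -a := by
  funext j
  simp only [Pi.smul_apply, Pi.neg_apply, smul_eq_mul]
  rw [← mul_assoc, Complex.I_mul_I]; ring

lemma dW_smulV (c : ℂ) : dW f z (c • a) = c * dW f z a := by
  have hc : c = (c.re : ℂ) + (c.im : ℂ) * Complex.I := (Complex.re_add_im c).symm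
  have h2 : Complex.I • c • a = c • (Complex.I • a) := smul_comm _ _ _
  rw [dW, dW, clm_smulC, h2, clm_smulC (fderiv ℝ f z) c (Complex.I • a), I_smul_I_smul, map_neg]
  simp only [Complex.real_smul]
  conv_rhs => rw [hc]
  ring_nf
  rw [Complex.I_sq]
  ring

lemma dWb_smulV (c : ℂ) : dWb f z (c • a) = (starRingEnd ℂ) c * dWb f z a := by
  have hcj : (starRingEnd ℂ) c = (c.re : ℂ) - (c.im : ℂ) * Complex.I := by
    apply Complex.ext <;> simp
  have h2 : Complex.I • c • a = c • (Complex.I • a) := smul_comm _ _ _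
  rw [dWb, dWb, clm_smulC, h2, clm_smulC (fderiv ℝ f z) c (Complex.I • a), I_smul_I_smul, map_neg]
  simp only [Complex.real_smul]
  rw [hcj]
  ring_nf
  rw [Complex.I_sq]
  ring

lemma dW_addV : dW f z (a + b) = dW f z a + dW f z b := by
  simp only [dW, smul_add, map_add]; ring

lemma dWb_addV : dWb f z (a + b) = dWb f z a + dWb f z b := by
  simp only [dWb, smul_add, map_add]; ring

lemma dW_subV : dW f z (a - b) = dW f z a - dW f z b := by
  simp only [dW, smul_sub, map_sub]; ring

lemma dWb_subV : dWb f z (a - b) = dWb f z a - dWb f z b := by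
  simp only [dWb, smul_sub, map_sub]; ring

lemma dW_negV : dW f z (-a) = - dW f z a := by
  simp only [dW, smul_neg, map_neg]; ring

lemma dWb_zeroV : dWb f z 0 = 0 := by
  simp [dWb]

lemma dWb_sumV {ι : Type*} (s : Finset ι) (w : ι → Fin n → ℂ) :
    dWb f z (∑ i ∈ s, w i) = ∑ i ∈ s, dWb f z (w i) := by
  classical
  induction s using Finset.induction_on with
  | empty => simpa using (dWb_zeroV (f := f) (z := z))
  | @insert i s hi ih => rw [Finset.sum_insert hi, Finset.sum_insert hi, dWb_addV, ih]

lemma single_decomp (j : Fin n) (c : ℂ) :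
    (Pi.single j c : Fin n → ℂ) = (c.re : ℝ) • (Pi.single j 1 : Fin n → ℂ) + (c.im : ℝ) • (Pi.single j Complex.I : Fin n → ℂ) := by
  funext k
  by_cases h : k = j
  · subst h; simp [Complex.real_smul]
  · simp [Pi.single_apply, h]

lemma clm_eval (L : (Fin n → ℂ) →L[ℝ] ℂ) (a : Fin n → ℂ) :
    L a = ∑ j, ((a j).re • L (Pi.single j 1) + (a j).im • L (Pi.single j Complex.I)) := by
  conv_lhs => rw [← Finset.univ_sum_single a, map_sum]
  refine Finset.sum_congr rfl fun j _ => ?_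
  rw [single_decomp j (a j), map_add, map_smul, map_smul]

lemma sum_wZ (f : (Fin n → ℂ) → ℂ) (z a : Fin n → ℂ) :
    (∑ j, a j * wirtingerZ f j z) = dW f z a := by
  rw [dW, clm_eval (fderiv ℝ f z) a, clm_eval (fderiv ℝ f z) (Complex.I • a)]
  rw [Finset.mul_sum, ← Finset.sum_sub_distrib, Finset.mul_sum]
  refine Finset.sum_congr rfl fun j _ => ?_
  have h1 : (Complex.I • a) j = Complex.I * a j := rfl
  have h2 : ((Complex.I * a j).re : ℝ) = -((a j).im) := by simp
  have h3 : ((Complex.I * a j).im : ℝ) = (a j).re := by simp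
  rw [wirtingerZ, h1, h2, h3]
  simp only [Complex.real_smul]
  conv_lhs => rw [← Complex.re_add_im (a j)]
  push_cast
  ring_nf
  rw [Complex.I_sq]
  ring

lemma sum_wZb (f : (Fin n → ℂ) → ℂ) (z a : Fin n → ℂ) :
    (∑ j, (starRingEnd ℂ) (a j) * wirtingerZbar f j z) = dWb f z a := by
  rw [dWb, clm_eval (fderiv ℝ f z) a, clm_eval (fderiv ℝ f z) (Complex.I • a)]
  rw [Finset.mul_sum, ← Finset.sum_add_distrib, Finset.mul_sum]
  refine Finset.sum_congr rfl fun j _ => ?_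
  have h1 : (Complex.I • a) j = Complex.I * a j := rfl
  have h2 : ((Complex.I * a j).re : ℝ) = -((a j).im) := by simp
  have h3 : ((Complex.I * a j).im : ℝ) = (a j).re := by simp
  have hcj : (starRingEnd ℂ) (a j) = ((a j).re : ℂ) - ((a j).im : ℂ) * Complex.I := by
    apply Complex.ext <;> simp
  rw [wirtingerZbar, h1, h2, h3, hcj]
  simp only [Complex.real_smul]
  ring_nf
  rw [Complex.I_sq]
  push_cast
  ring

lemma wZ_eq (j : Fin n) : wirtingerZ f j z = dW f z (Pi.single j 1) := by
  rw [← sum_wZ]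
  rw [Finset.sum_eq_single j]
  · simp [Pi.single_apply]
  · intro k _ hk; simp [Pi.single_apply, hk]
  · simp

lemma wZb_eq (j : Fin n) : wirtingerZbar f j z = dWb f z (Pi.single j 1) := by
  rw [← sum_wZb]
  rw [Finset.sum_eq_single j]
  · simp [Pi.single_apply]
  · intro k _ hk; simp [Pi.single_apply, hk]
  · simp

lemma cdAt {F : Type*} [NormedAddCommGroup F] [NormedSpace ℝ F] {f : (Fin n → ℂ) → F}
    (hU : IsOpen U) (hf : ContDiffOn ℝ (⊤ : ℕ∞) f U) (hz : z ∈ U) : DifferentiableAt ℝ f z :=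
  (hf.contDiffAt (hU.mem_nhds hz)).differentiableAt (by simp)

lemma diff_fderiv {F : Type*} [NormedAddCommGroup F] [NormedSpace ℝ F] {f : (Fin n → ℂ) → F}
    (hU : IsOpen U) (hf : ContDiffOn ℝ (⊤ : ℕ∞) f U) (hz : z ∈ U) :
    DifferentiableAt ℝ (fderiv ℝ f) z :=
  ((hf.contDiffAt (hU.mem_nhds hz)).fderiv_right (m := 1) (WithTop.coe_le_coe.mpr le_top)).differentiableAt one_ne_zero

lemma schwarz {F : Type*} [NormedAddCommGroup F] [NormedSpace ℝ F] {f : (Fin n → ℂ) → F}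
    (hU : IsOpen U) (hf : ContDiffOn ℝ (⊤ : ℕ∞) f U) (hz : z ∈ U) (v w : Fin n → ℂ) :
    fderiv ℝ (fderiv ℝ f) z v w = fderiv ℝ (fderiv ℝ f) z w v := by
  apply second_derivative_symmetric_of_eventually
  · filter_upwards [hU.mem_nhds hz] with y hy
    exact (cdAt hU hf hy).hasFDerivAt
  · exact (diff_fderiv hU hf hz).hasFDerivAt

lemma diffAt_dW (hU : IsOpen U) (hf : ContDiffOn ℝ (⊤ : ℕ∞) f U) (hz : z ∈ U)
    (hA : DifferentiableAt ℝ A z) : DifferentiableAt ℝ (fun w => dW f w (A w)) z := by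
  unfold dW
  exact ((((diff_fderiv hU hf hz).clm_apply hA).sub
    (((diff_fderiv hU hf hz).clm_apply (hA.const_smul Complex.I)).const_mul Complex.I)).const_mul _)

lemma diffAt_dWb (hU : IsOpen U) (hf : ContDiffOn ℝ (⊤ : ℕ∞) f U) (hz : z ∈ U)
    (hA : DifferentiableAt ℝ A z) : DifferentiableAt ℝ (fun w => dWb f w (A w)) z := by
  unfold dWb
  exact ((((diff_fderiv hU hf hz).clm_apply hA).add
    (((diff_fderiv hU hf hz).clm_apply (hA.const_smul Complex.I)).const_mul Complex.I)).const_mul _)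

lemma master1 (hU : IsOpen U) (hz : z ∈ U) (hf : ContDiffOn ℝ (⊤ : ℕ∞) f U)
    (hA : DifferentiableAt ℝ A z) (u : Fin n → ℂ) :
    dW (fun w => dW f w (A w)) z u
      = dW (fun w => dW f w (A z)) z u
        + dW f z ((1/2 : ℂ) • fderiv ℝ A z u - (Complex.I / 2) • fderiv ℝ A z (Complex.I • u)) := by
  have hdf : DifferentiableAt ℝ (fderiv ℝ f) z := diff_fderiv hU hf hz
  have hA' : DifferentiableAt ℝ (fun w => Complex.I • A w) z := hA.const_smul Complex.I
  have hg1 : DifferentiableAt ℝ (fun w => fderiv ℝ f w (A w)) z := hdf.clm_apply hA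
  have hg2 : DifferentiableAt ℝ (fun w => fderiv ℝ f w (Complex.I • A w)) z := hdf.clm_apply hA'
  have h1 : fderiv ℝ (fun w => fderiv ℝ f w (A w)) z
      = (fderiv ℝ f z).comp (fderiv ℝ A z) + (fderiv ℝ (fderiv ℝ f) z).flip (A z) :=
    fderiv_clm_apply hdf hA
  have hAs : fderiv ℝ (fun w => Complex.I • A w) z = Complex.I • fderiv ℝ A z :=
    fderiv_fun_const_smul hA _
  have h2 : fderiv ℝ (fun w => fderiv ℝ f w (Complex.I • A w)) z
      = (fderiv ℝ f z).comp (Complex.I • fderiv ℝ A z) + (fderiv ℝ (fderiv ℝ f) z).flip (Complex.I • A z) := by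
    rw [← hAs]; exact fderiv_clm_apply hdf hA'
  have h1c : fderiv ℝ (fun w => fderiv ℝ f w (A z)) z = (fderiv ℝ (fderiv ℝ f) z).flip (A z) := by
    have := fderiv_clm_apply (c := fderiv ℝ f) (u := fun _ => A z) hdf (differentiableAt_const (A z))
    simpa using this
  have h2c : fderiv ℝ (fun w => fderiv ℝ f w (Complex.I • A z)) z
      = (fderiv ℝ (fderiv ℝ f) z).flip (Complex.I • A z) := by
    have := fderiv_clm_apply (c := fderiv ℝ f) (u := fun _ => Complex.I • A z) hdf
      (differentiableAt_const (Complex.I • A z))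
    simpa using this
  have hFder : fderiv ℝ (fun w => dW f w (A w)) z
      = (1/2 : ℂ) • (fderiv ℝ (fun w => fderiv ℝ f w (A w)) z
          - Complex.I • fderiv ℝ (fun w => fderiv ℝ f w (Complex.I • A w)) z) := by
    unfold dW
    rw [fderiv_const_mul (hg1.fun_sub (hg2.const_mul Complex.I)) ((1:ℂ)/2),
      fderiv_fun_sub hg1 (hg2.const_mul Complex.I), fderiv_const_mul hg2 Complex.I]
  have hGder : fderiv ℝ (fun w => dW f w (A z)) z
      = (1/2 : ℂ) • (fderiv ℝ (fun w => fderiv ℝ f w (A z)) z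
          - Complex.I • fderiv ℝ (fun w => fderiv ℝ f w (Complex.I • A z)) z) := by
    have hc1 : DifferentiableAt ℝ (fun w => fderiv ℝ f w (A z)) z :=
      hdf.clm_apply (differentiableAt_const _)
    have hc2 : DifferentiableAt ℝ (fun w => fderiv ℝ f w (Complex.I • A z)) z :=
      hdf.clm_apply (differentiableAt_const _)
    unfold dW
    rw [fderiv_const_mul (hc1.fun_sub (hc2.const_mul Complex.I)) ((1:ℂ)/2),
      fderiv_fun_sub hc1 (hc2.const_mul Complex.I), fderiv_const_mul hc2 Complex.I]
  have e1 : dW f z ((1/2 : ℂ) • fderiv ℝ A z u - (Complex.I / 2) • fderiv ℝ A z (Complex.I • u))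
      = (1/2 : ℂ) * dW f z (fderiv ℝ A z u) - (Complex.I/2) * dW f z (fderiv ℝ A z (Complex.I • u)) := by
    rw [sub_eq_add_neg, ← neg_smul, dW_addV, dW_smulV, dW_smulV]; ring
  rw [dW, dW, hFder, hGder, h1, h2, h1c, h2c, e1]
  unfold dW
  simp only [ContinuousLinearMap.smul_apply, ContinuousLinearMap.sub_apply,
    ContinuousLinearMap.add_apply, ContinuousLinearMap.comp_apply,
    ContinuousLinearMap.flip_apply, smul_eq_mul]
  ring

lemma master2 (hU : IsOpen U) (hz : z ∈ U) (hf : ContDiffOn ℝ (⊤ : ℕ∞) f U)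
    (hA : DifferentiableAt ℝ A z) (u : Fin n → ℂ) :
    dWb (fun w => dW f w (A w)) z u
      = dWb (fun w => dW f w (A z)) z u
        + dW f z ((1/2 : ℂ) • fderiv ℝ A z u + (Complex.I / 2) • fderiv ℝ A z (Complex.I • u)) := by
  have hdf : DifferentiableAt ℝ (fderiv ℝ f) z := diff_fderiv hU hf hz
  have hA' : DifferentiableAt ℝ (fun w => Complex.I • A w) z := hA.const_smul Complex.I
  have hg1 : DifferentiableAt ℝ (fun w => fderiv ℝ f w (A w)) z := hdf.clm_apply hA
  have hg2 : DifferentiableAt ℝ (fun w => fderiv ℝ f w (Complex.I • A w)) z := hdf.clm_apply hA'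
  have h1 : fderiv ℝ (fun w => fderiv ℝ f w (A w)) z
      = (fderiv ℝ f z).comp (fderiv ℝ A z) + (fderiv ℝ (fderiv ℝ f) z).flip (A z) :=
    fderiv_clm_apply hdf hA
  have hAs : fderiv ℝ (fun w => Complex.I • A w) z = Complex.I • fderiv ℝ A z :=
    fderiv_fun_const_smul hA _
  have h2 : fderiv ℝ (fun w => fderiv ℝ f w (Complex.I • A w)) z
      = (fderiv ℝ f z).comp (Complex.I • fderiv ℝ A z) + (fderiv ℝ (fderiv ℝ f) z).flip (Complex.I • A z) := by
    rw [← hAs]; exact fderiv_clm_apply hdf hA'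
  have h1c : fderiv ℝ (fun w => fderiv ℝ f w (A z)) z = (fderiv ℝ (fderiv ℝ f) z).flip (A z) := by
    have := fderiv_clm_apply (c := fderiv ℝ f) (u := fun _ => A z) hdf (differentiableAt_const (A z))
    simpa using this
  have h2c : fderiv ℝ (fun w => fderiv ℝ f w (Complex.I • A z)) z
      = (fderiv ℝ (fderiv ℝ f) z).flip (Complex.I • A z) := by
    have := fderiv_clm_apply (c := fderiv ℝ f) (u := fun _ => Complex.I • A z) hdf
      (differentiableAt_const (Complex.I • A z))
    simpa using this
  have hFder : fderiv ℝ (fun w => dW f w (A w)) z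
      = (1/2 : ℂ) • (fderiv ℝ (fun w => fderiv ℝ f w (A w)) z
          - Complex.I • fderiv ℝ (fun w => fderiv ℝ f w (Complex.I • A w)) z) := by
    unfold dW
    rw [fderiv_const_mul (hg1.fun_sub (hg2.const_mul Complex.I)) ((1:ℂ)/2),
      fderiv_fun_sub hg1 (hg2.const_mul Complex.I), fderiv_const_mul hg2 Complex.I]
  have hGder : fderiv ℝ (fun w => dW f w (A z)) z
      = (1/2 : ℂ) • (fderiv ℝ (fun w => fderiv ℝ f w (A z)) z
          - Complex.I • fderiv ℝ (fun w => fderiv ℝ f w (Complex.I • A z)) z) := by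
    have hc1 : DifferentiableAt ℝ (fun w => fderiv ℝ f w (A z)) z :=
      hdf.clm_apply (differentiableAt_const _)
    have hc2 : DifferentiableAt ℝ (fun w => fderiv ℝ f w (Complex.I • A z)) z :=
      hdf.clm_apply (differentiableAt_const _)
    unfold dW
    rw [fderiv_const_mul (hc1.fun_sub (hc2.const_mul Complex.I)) ((1:ℂ)/2),
      fderiv_fun_sub hc1 (hc2.const_mul Complex.I), fderiv_const_mul hc2 Complex.I]
  have e1 : dW f z ((1/2 : ℂ) • fderiv ℝ A z u + (Complex.I / 2) • fderiv ℝ A z (Complex.I • u))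
      = (1/2 : ℂ) * dW f z (fderiv ℝ A z u) + (Complex.I/2) * dW f z (fderiv ℝ A z (Complex.I • u)) := by
    rw [dW_addV, dW_smulV, dW_smulV]
  rw [dWb, dWb, hFder, hGder, h1, h2, h1c, h2c, e1]
  unfold dW
  simp only [ContinuousLinearMap.smul_apply, ContinuousLinearMap.sub_apply,
    ContinuousLinearMap.add_apply, ContinuousLinearMap.comp_apply,
    ContinuousLinearMap.flip_apply, smul_eq_mul]
  ring

lemma master3 (hU : IsOpen U) (hz : z ∈ U) (hf : ContDiffOn ℝ (⊤ : ℕ∞) f U)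
    (hA : DifferentiableAt ℝ A z) (u : Fin n → ℂ) :
    dWb (fun w => dWb f w (A w)) z u
      = dWb (fun w => dWb f w (A z)) z u
        + dWb f z ((1/2 : ℂ) • fderiv ℝ A z u - (Complex.I / 2) • fderiv ℝ A z (Complex.I • u)) := by
  have hdf : DifferentiableAt ℝ (fderiv ℝ f) z := diff_fderiv hU hf hz
  have hA' : DifferentiableAt ℝ (fun w => Complex.I • A w) z := hA.const_smul Complex.I
  have hg1 : DifferentiableAt ℝ (fun w => fderiv ℝ f w (A w)) z := hdf.clm_apply hA
  have hg2 : DifferentiableAt ℝ (fun w => fderiv ℝ f w (Complex.I • A w)) z := hdf.clm_apply hA'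
  have h1 : fderiv ℝ (fun w => fderiv ℝ f w (A w)) z
      = (fderiv ℝ f z).comp (fderiv ℝ A z) + (fderiv ℝ (fderiv ℝ f) z).flip (A z) :=
    fderiv_clm_apply hdf hA
  have hAs : fderiv ℝ (fun w => Complex.I • A w) z = Complex.I • fderiv ℝ A z :=
    fderiv_fun_const_smul hA _
  have h2 : fderiv ℝ (fun w => fderiv ℝ f w (Complex.I • A w)) z
      = (fderiv ℝ f z).comp (Complex.I • fderiv ℝ A z) + (fderiv ℝ (fderiv ℝ f) z).flip (Complex.I • A z) := by
    rw [← hAs]; exact fderiv_clm_apply hdf hA'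
  have h1c : fderiv ℝ (fun w => fderiv ℝ f w (A z)) z = (fderiv ℝ (fderiv ℝ f) z).flip (A z) := by
    have := fderiv_clm_apply (c := fderiv ℝ f) (u := fun _ => A z) hdf (differentiableAt_const (A z))
    simpa using this
  have h2c : fderiv ℝ (fun w => fderiv ℝ f w (Complex.I • A z)) z
      = (fderiv ℝ (fderiv ℝ f) z).flip (Complex.I • A z) := by
    have := fderiv_clm_apply (c := fderiv ℝ f) (u := fun _ => Complex.I • A z) hdf
      (differentiableAt_const (Complex.I • A z))
    simpa using this
  have hFder : fderiv ℝ (fun w => dWb f w (A w)) z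
      = (1/2 : ℂ) • (fderiv ℝ (fun w => fderiv ℝ f w (A w)) z
          + Complex.I • fderiv ℝ (fun w => fderiv ℝ f w (Complex.I • A w)) z) := by
    unfold dWb
    rw [fderiv_const_mul (hg1.fun_add (hg2.const_mul Complex.I)) ((1:ℂ)/2),
      fderiv_fun_add hg1 (hg2.const_mul Complex.I), fderiv_const_mul hg2 Complex.I]
  have hGder : fderiv ℝ (fun w => dWb f w (A z)) z
      = (1/2 : ℂ) • (fderiv ℝ (fun w => fderiv ℝ f w (A z)) z
          + Complex.I • fderiv ℝ (fun w => fderiv ℝ f w (Complex.I • A z)) z) := by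
    have hc1 : DifferentiableAt ℝ (fun w => fderiv ℝ f w (A z)) z :=
      hdf.clm_apply (differentiableAt_const _)
    have hc2 : DifferentiableAt ℝ (fun w => fderiv ℝ f w (Complex.I • A z)) z :=
      hdf.clm_apply (differentiableAt_const _)
    unfold dWb
    rw [fderiv_const_mul (hc1.fun_add (hc2.const_mul Complex.I)) ((1:ℂ)/2),
      fderiv_fun_add hc1 (hc2.const_mul Complex.I), fderiv_const_mul hc2 Complex.I]
  have e1 : dWb f z ((1/2 : ℂ) • fderiv ℝ A z u - (Complex.I / 2) • fderiv ℝ A z (Complex.I • u))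
      = (1/2 : ℂ) * dWb f z (fderiv ℝ A z u) + (Complex.I/2) * dWb f z (fderiv ℝ A z (Complex.I • u)) := by
    rw [sub_eq_add_neg, ← neg_smul, dWb_addV, dWb_smulV, dWb_smulV]
    have hh1 : (starRingEnd ℂ) ((1:ℂ)/2) = 1/2 := by apply Complex.ext <;> simp
    have hh2 : (starRingEnd ℂ) (-(Complex.I/2)) = Complex.I/2 := by
      rw [map_neg, map_div₀, Complex.conj_I, map_ofNat]; ring
    rw [hh1, hh2]
  rw [dWb, dWb, hFder, hGder, h1, h2, h1c, h2c, e1]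
  unfold dWb
  simp only [ContinuousLinearMap.smul_apply, ContinuousLinearMap.sub_apply,
    ContinuousLinearMap.add_apply, ContinuousLinearMap.comp_apply,
    ContinuousLinearMap.flip_apply, smul_eq_mul]
  ring

lemma fderiv_dW_const (hU : IsOpen U) (hf : ContDiffOn ℝ (⊤ : ℕ∞) f U) (hz : z ∈ U) (v : Fin n → ℂ) :
    fderiv ℝ (fun w => dW f w v) z
      = (1/2 : ℂ) • ((fderiv ℝ (fderiv ℝ f) z).flip v
          - Complex.I • (fderiv ℝ (fderiv ℝ f) z).flip (Complex.I • v)) := by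
  have hdf : DifferentiableAt ℝ (fderiv ℝ f) z := diff_fderiv hU hf hz
  have hc1 : DifferentiableAt ℝ (fun w => fderiv ℝ f w v) z :=
    hdf.clm_apply (differentiableAt_const _)
  have hc2 : DifferentiableAt ℝ (fun w => fderiv ℝ f w (Complex.I • v)) z :=
    hdf.clm_apply (differentiableAt_const _)
  have h1c : fderiv ℝ (fun w => fderiv ℝ f w v) z = (fderiv ℝ (fderiv ℝ f) z).flip v := by
    have := fderiv_clm_apply (c := fderiv ℝ f) (u := fun _ => v) hdf (differentiableAt_const v)
    simpa using this
  have h2c : fderiv ℝ (fun w => fderiv ℝ f w (Complex.I • v)) z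
      = (fderiv ℝ (fderiv ℝ f) z).flip (Complex.I • v) := by
    have := fderiv_clm_apply (c := fderiv ℝ f) (u := fun _ => Complex.I • v) hdf
      (differentiableAt_const (Complex.I • v))
    simpa using this
  unfold dW
  rw [fderiv_const_mul (hc1.fun_sub (hc2.const_mul Complex.I)) ((1:ℂ)/2),
    fderiv_fun_sub hc1 (hc2.const_mul Complex.I), fderiv_const_mul hc2 Complex.I, h1c, h2c]

lemma fderiv_dWb_const (hU : IsOpen U) (hf : ContDiffOn ℝ (⊤ : ℕ∞) f U) (hz : z ∈ U) (v : Fin n → ℂ) :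
    fderiv ℝ (fun w => dWb f w v) z
      = (1/2 : ℂ) • ((fderiv ℝ (fderiv ℝ f) z).flip v
          + Complex.I • (fderiv ℝ (fderiv ℝ f) z).flip (Complex.I • v)) := by
  have hdf : DifferentiableAt ℝ (fderiv ℝ f) z := diff_fderiv hU hf hz
  have hc1 : DifferentiableAt ℝ (fun w => fderiv ℝ f w v) z :=
    hdf.clm_apply (differentiableAt_const _)
  have hc2 : DifferentiableAt ℝ (fun w => fderiv ℝ f w (Complex.I • v)) z :=
    hdf.clm_apply (differentiableAt_const _)
  have h1c : fderiv ℝ (fun w => fderiv ℝ f w v) z = (fderiv ℝ (fderiv ℝ f) z).flip v := by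
    have := fderiv_clm_apply (c := fderiv ℝ f) (u := fun _ => v) hdf (differentiableAt_const v)
    simpa using this
  have h2c : fderiv ℝ (fun w => fderiv ℝ f w (Complex.I • v)) z
      = (fderiv ℝ (fderiv ℝ f) z).flip (Complex.I • v) := by
    have := fderiv_clm_apply (c := fderiv ℝ f) (u := fun _ => Complex.I • v) hdf
      (differentiableAt_const (Complex.I • v))
    simpa using this
  unfold dWb
  rw [fderiv_const_mul (hc1.fun_add (hc2.const_mul Complex.I)) ((1:ℂ)/2),
    fderiv_fun_add hc1 (hc2.const_mul Complex.I), fderiv_const_mul hc2 Complex.I, h1c, h2c]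

lemma dW_dW_symm (hU : IsOpen U) (hf : ContDiffOn ℝ (⊤ : ℕ∞) f U) (hz : z ∈ U) (u v : Fin n → ℂ) :
    dW (fun w => dW f w v) z u = dW (fun w => dW f w u) z v := by
  have hs := schwarz hU hf hz
  rw [dW, dW, fderiv_dW_const hU hf hz v, fderiv_dW_const hU hf hz u]
  simp only [ContinuousLinearMap.smul_apply, ContinuousLinearMap.sub_apply,
    ContinuousLinearMap.flip_apply, smul_eq_mul]
  rw [hs u v, hs u (Complex.I • v), hs (Complex.I • u) v, hs (Complex.I • u) (Complex.I • v)]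
  ring

lemma dWb_dWb_symm (hU : IsOpen U) (hf : ContDiffOn ℝ (⊤ : ℕ∞) f U) (hz : z ∈ U) (u v : Fin n → ℂ) :
    dWb (fun w => dWb f w v) z u = dWb (fun w => dWb f w u) z v := by
  have hs := schwarz hU hf hz
  rw [dWb, dWb, fderiv_dWb_const hU hf hz v, fderiv_dWb_const hU hf hz u]
  simp only [ContinuousLinearMap.smul_apply, ContinuousLinearMap.add_apply,
    ContinuousLinearMap.flip_apply, smul_eq_mul]
  rw [hs u v, hs u (Complex.I • v), hs (Complex.I • u) v, hs (Complex.I • u) (Complex.I • v)]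
  ring

lemma real_M (hU : IsOpen U) (hρ : ContDiffOn ℝ (⊤ : ℕ∞) ρ U) (hz : z ∈ U) (a b : Fin n → ℂ) :
    (starRingEnd ℂ) (fderiv ℝ (fderiv ℝ (fun u => ((ρ u : ℝ) : ℂ))) z a b)
      = fderiv ℝ (fderiv ℝ (fun u => ((ρ u : ℝ) : ℂ))) z a b := by
  have hEq : fderiv ℝ (fun u => ((ρ u : ℝ) : ℂ))
      =ᶠ[nhds z] fun y => Complex.ofRealCLM.comp (fderiv ℝ ρ y) := by
    filter_upwards [hU.mem_nhds hz] with y hy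
    exact (Complex.ofRealCLM.hasFDerivAt.comp y (cdAt hU hρ hy).hasFDerivAt).fderiv
  rw [hEq.fderiv_eq]
  have hT : fderiv ℝ (fun y => Complex.ofRealCLM.comp (fderiv ℝ ρ y)) z
      = ((ContinuousLinearMap.compL ℝ (Fin n → ℂ) ℝ ℂ) Complex.ofRealCLM).comp
          (fderiv ℝ (fderiv ℝ ρ) z) :=
    (((ContinuousLinearMap.compL ℝ (Fin n → ℂ) ℝ ℂ) Complex.ofRealCLM).hasFDerivAt.comp z
      (diff_fderiv hU hρ hz).hasFDerivAt).fderiv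
  rw [hT]
  simp [Complex.conj_ofReal]

lemma herm (hU : IsOpen U) (hρ : ContDiffOn ℝ (⊤ : ℕ∞) ρ U) (hz : z ∈ U) (v w : Fin n → ℂ) :
    dWb (fun y => dW (fun u => ((ρ u : ℝ) : ℂ)) y v) z w
      = (starRingEnd ℂ) (dWb (fun y => dW (fun u => ((ρ u : ℝ) : ℂ)) y w) z v) := by
  have hrc : ContDiffOn ℝ (⊤ : ℕ∞) (fun u => ((ρ u : ℝ) : ℂ)) U :=
    Complex.ofRealCLM.contDiff.comp_contDiffOn hρ
  have hs := schwarz hU hrc hz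
  have hr := real_M hU hρ hz
  rw [dWb, dWb, fderiv_dW_const hU hrc hz v, fderiv_dW_const hU hrc hz w]
  simp only [ContinuousLinearMap.smul_apply, ContinuousLinearMap.sub_apply,
    ContinuousLinearMap.flip_apply, smul_eq_mul, map_mul, map_add, map_sub, map_div₀,
    map_one, map_ofNat, Complex.conj_I, hr]
  rw [hs v w, hs v (Complex.I • w), hs (Complex.I • v) w, hs (Complex.I • v) (Complex.I • w)]
  ring

lemma tangential_fderiv_zero (hU : IsOpen U) (hρ : ContDiffOn ℝ (⊤ : ℕ∞) ρ U)
    (hz : z ∈ U) (hρz : ρ z = 0) (hnd : fderiv ℝ ρ z ≠ 0)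
    (hf : DifferentiableAt ℝ f z) (hfS : ∀ w ∈ U, ρ w = 0 → f w = 0)
    (hv : fderiv ℝ ρ z v = 0) :
    fderiv ℝ f z v = 0 := by
  set F := fderiv ℝ ρ z with hF
  have hstrict : HasStrictFDerivAt ρ F z :=
    (hρ.contDiffAt (hU.mem_nhds hz)).hasStrictFDerivAt (by simp)
  have hsurj : F.range = ⊤ := by
    rw [LinearMap.range_eq_top]
    obtain ⟨w, hw⟩ : ∃ w, F w ≠ 0 := by
      by_contra h
      push_neg at h
      exact hnd (ContinuousLinearMap.ext fun w => by simp [h w])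
    intro t
    refine ⟨(t / F w) • w, ?_⟩
    rw [map_smul, smul_eq_mul]
    field_simp
    rfl
  set v' : F.ker := ⟨v, hv⟩ with hv'
  set ψ := hstrict.implicitFunction ρ F hsurj with hψ
  set γ : ℝ → (Fin n → ℂ) := fun t => ψ (ρ z) (t • v') with hγ
  have hγ0 : ψ (ρ z) 0 = z := hstrict.implicitFunction_apply_image hsurj
  have hcurve : HasDerivAt γ v 0 := by
    have h1 : HasStrictFDerivAt (ψ (ρ z)) F.ker.subtypeL ((0:ℝ) • v') := by
      rw [zero_smul]
      exact hstrict.to_implicitFunction hsurj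
    have h2 : HasDerivAt (fun t : ℝ => t • v') v' 0 := by
      simpa using (hasDerivAt_id (0:ℝ)).smul_const v'
    have h3 := h1.hasFDerivAt.comp_hasDerivAt 0 h2
    exact h3
  have hmem : ∀ᶠ t : ℝ in nhds 0, ρ (γ t) = ρ z := by
    have hcont : Filter.Tendsto (fun t : ℝ => ((ρ z : ℝ), t • v'))
        (nhds 0) (nhds (ρ z, (0 : F.ker))) := by
      refine Filter.Tendsto.prodMk_nhds tendsto_const_nhds ?_
      have h4 : Filter.Tendsto (fun t : ℝ => t • v') (nhds 0) (nhds ((0:ℝ) • v')) :=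
        (Filter.tendsto_id.smul_const v')
      simpa using h4
    filter_upwards [hcont.eventually (hstrict.map_implicitFunction_eq hsurj)] with t ht
    exact ht
  have htend : Filter.Tendsto γ (nhds 0) (nhds z) := by
    have h := hcurve.continuousAt.tendsto
    simpa [hγ, hγ0] using h
  have hU' : ∀ᶠ t : ℝ in nhds 0, γ t ∈ U := htend.eventually (hU.mem_nhds hz)
  have hzero : (fun t : ℝ => f (γ t)) =ᶠ[nhds 0] fun _ => 0 := by
    filter_upwards [hmem, hU'] with t h1 h2
    exact hfS _ h2 (by rw [h1, hρz])
  have hl : HasFDerivAt f (fderiv ℝ f z) (γ 0) := by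
    have hγ00 : γ 0 = z := by simp [hγ, hγ0]
    rw [hγ00]
    exact hf.hasFDerivAt
  have hcomp : HasDerivAt (fun t : ℝ => f (γ t)) (fderiv ℝ f z v) 0 :=
    hl.comp_hasDerivAt 0 hcurve
  have hzero' : HasDerivAt (fun t : ℝ => f (γ t)) 0 0 :=
    (hasDerivAt_const 0 (0:ℂ)).congr_of_eventuallyEq hzero
  exact hcomp.unique hzero'

lemma tangential_dW_dWb (hU : IsOpen U) (hρ : ContDiffOn ℝ (⊤ : ℕ∞) ρ U) (hz : z ∈ U) (hρz : ρ z = 0)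
    (hnd : fderiv ℝ ρ z ≠ 0) (hf : DifferentiableAt ℝ f z)
    (hfS : ∀ w ∈ U, ρ w = 0 → f w = 0)
    (ha : dW (fun u => ((ρ u : ℝ) : ℂ)) z a = 0) :
    dW f z a = 0 ∧ dWb f z a = 0 := by
  have hρd : DifferentiableAt ℝ ρ z := cdAt hU hρ hz
  have hrc : fderiv ℝ (fun u => ((ρ u : ℝ) : ℂ)) z = Complex.ofRealCLM.comp (fderiv ℝ ρ z) :=
    (Complex.ofRealCLM.hasFDerivAt.comp z hρd.hasFDerivAt).fderiv
  rw [dW, hrc] at ha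
  simp only [ContinuousLinearMap.comp_apply, Complex.ofRealCLM_apply] at ha
  have h1 : fderiv ℝ ρ z a = 0 ∧ fderiv ℝ ρ z (Complex.I • a) = 0 := by
    have hre := congrArg Complex.re ha
    have him := congrArg Complex.im ha
    simp [Complex.mul_re, Complex.mul_im] at hre him
    constructor <;> linarith
  have e1 : fderiv ℝ f z a = 0 :=
    tangential_fderiv_zero hU hρ hz hρz hnd hf hfS h1.1
  have e2 : fderiv ℝ f z (Complex.I • a) = 0 :=
    tangential_fderiv_zero hU hρ hz hρz hnd hf hfS h1.2
  constructor <;> (first | rw [dW, e1, e2] | rw [dWb, e1, e2]) <;> ring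

lemma dWb_fun_add (hf : DifferentiableAt ℝ f z) (hg : DifferentiableAt ℝ g z) :
    dWb (fun w => f w + g w) z a = dWb f z a + dWb g z a := by
  simp only [dWb, fderiv_fun_add hf hg, ContinuousLinearMap.add_apply]; ring

lemma dWb_fun_const_mul (hf : DifferentiableAt ℝ f z) (c : ℂ) :
    dWb (fun w => c * f w) z a = c * dWb f z a := by
  simp only [dWb, fderiv_const_mul hf c, ContinuousLinearMap.smul_apply, smul_eq_mul]; ring

lemma dWb_fun_mul (hf : DifferentiableAt ℝ f z) (hg : DifferentiableAt ℝ g z) :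
    dWb (fun w => f w * g w) z a = f z * dWb g z a + g z * dWb f z a := by
  simp only [dWb, fderiv_fun_mul hf hg, ContinuousLinearMap.add_apply,
    ContinuousLinearMap.smul_apply, smul_eq_mul]; ring

lemma dWb_fun_sum {ι : Type*} (s : Finset ι) (c : ι → ℂ) (F : ι → (Fin n → ℂ) → ℂ)
    (hF : ∀ i ∈ s, DifferentiableAt ℝ (F i) z) :
    dWb (fun w => ∑ i ∈ s, c i * F i w) z a = ∑ i ∈ s, c i * dWb (F i) z a := by
  classical
  induction s using Finset.induction_on with
  | empty => simp [dWb]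
  | @insert i s hi ih =>
      have hFi : DifferentiableAt ℝ (F i) z := hF i (Finset.mem_insert_self i s)
      have hsum : DifferentiableAt ℝ (fun w => ∑ k ∈ s, c k * F k w) z :=
        DifferentiableAt.fun_sum fun k hk => (hF k (Finset.mem_insert_of_mem hk)).const_mul _
      rw [Finset.sum_insert hi]
      have hh : (fun w => ∑ k ∈ insert i s, c k * F k w)
          = fun w => c i * F i w + ∑ k ∈ s, c k * F k w := by
        funext w; rw [Finset.sum_insert hi]
      rw [hh, dWb_fun_add (hFi.const_mul _) hsum, dWb_fun_const_mul hFi,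
        ih fun k hk => hF k (Finset.mem_insert_of_mem hk)]

lemma leviForm_eq (hU : IsOpen U) (hρ : ContDiffOn ℝ (⊤ : ℕ∞) ρ U) (hz : z ∈ U)
    (A B : (Fin n → ℂ) → (Fin n → ℂ)) :
    leviForm ρ A B z = dWb (fun w => dW (fun u => ((ρ u : ℝ) : ℂ)) w (A z)) z (B z) := by
  have hrc : ContDiffOn ℝ (⊤ : ℕ∞) (fun u => ((ρ u : ℝ) : ℂ)) U :=
    Complex.ofRealCLM.contDiff.comp_contDiffOn hρ
  have hdiff : ∀ j : Fin n, DifferentiableAt ℝ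
      (fun w => wirtingerZ (fun u => ((ρ u : ℝ) : ℂ)) j w) z := by
    intro j
    have he : (fun w => wirtingerZ (fun u => ((ρ u : ℝ) : ℂ)) j w)
        = fun w => dW (fun u => ((ρ u : ℝ) : ℂ)) w (Pi.single j 1) := funext fun w => wZ_eq j
    rw [he]
    exact diffAt_dW hU hrc hz (differentiableAt_const _)
  unfold leviForm
  rw [Finset.sum_comm]
  calc ∑ k, ∑ j, wirtingerZbar (fun w => wirtingerZ (fun u => ((ρ u : ℝ) : ℂ)) j w) k z
        * A z j * (starRingEnd ℂ) (B z k)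
      = ∑ k, (starRingEnd ℂ) (B z k)
         * dWb (fun w => ∑ j, A z j * wirtingerZ (fun u => ((ρ u : ℝ) : ℂ)) j w) z (Pi.single k 1) := by
        refine Finset.sum_congr rfl fun k _ => ?_
        rw [dWb_fun_sum Finset.univ (fun j => A z j)
          (fun j => fun w => wirtingerZ (fun u => ((ρ u : ℝ) : ℂ)) j w) (fun j _ => hdiff j),
          Finset.mul_sum]
        refine Finset.sum_congr rfl fun j _ => ?_
        rw [wZb_eq]
        ring
    _ = ∑ k, (starRingEnd ℂ) (B z k)
         * wirtingerZbar (fun w => dW (fun u => ((ρ u : ℝ) : ℂ)) w (A z)) k z := by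
        have hfun : (fun w => ∑ j, A z j * wirtingerZ (fun u => ((ρ u : ℝ) : ℂ)) j w)
            = fun w => dW (fun u => ((ρ u : ℝ) : ℂ)) w (A z) :=
          funext fun w => sum_wZ _ w (A z)
        refine Finset.sum_congr rfl fun k _ => ?_
        rw [hfun, wZb_eq]
    _ = dWb (fun w => dW (fun u => ((ρ u : ℝ) : ℂ)) w (A z)) z (B z) := sum_wZb _ _ _

lemma dWb_comp_proj (hA : DifferentiableAt ℝ A z) (u : Fin n → ℂ) (j : Fin n) :
    dWb (fun w => A w j) z u
      = ((1/2 : ℂ) • fderiv ℝ A z u + (Complex.I/2) • fderiv ℝ A z (Complex.I • u)) j := by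
  have hproj : fderiv ℝ (fun w => A w j) z
      = (ContinuousLinearMap.proj (R := ℝ) (φ := fun _ : Fin n => ℂ) j).comp (fderiv ℝ A z) :=
    ((ContinuousLinearMap.proj (R := ℝ) (φ := fun _ : Fin n => ℂ) j).hasFDerivAt.comp
      z hA.hasFDerivAt).fderiv
  rw [dWb, hproj]
  simp only [ContinuousLinearMap.comp_apply, ContinuousLinearMap.proj_apply,
    Pi.add_apply, Pi.smul_apply, smul_eq_mul]
  ring

lemma dWb_real_zero (hφd : DifferentiableAt ℝ φ z) (h0 : fderiv ℝ φ z = 0) (a : Fin n → ℂ) :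
    dWb (fun w => ((φ w : ℝ) : ℂ)) z a = 0 := by
  have hrc : fderiv ℝ (fun u => ((φ u : ℝ) : ℂ)) z = Complex.ofRealCLM.comp (fderiv ℝ φ z) :=
    (Complex.ofRealCLM.hasFDerivAt.comp z hφd.hasFDerivAt).fderiv
  rw [dWb, hrc, h0]
  simp

lemma cs_null (P : (Fin n → ℂ) → (Fin n → ℂ) → ℂ) (T : (Fin n → ℂ) → Prop)
    (Tadd : ∀ u v, T u → T v → T (u + v)) (Tsmul : ∀ (c : ℂ) u, T u → T (c • u))
    (Padd1 : ∀ u v w, P (u + v) w = P u w + P v w)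
    (Psmul1 : ∀ (c : ℂ) u w, P (c • u) w = c * P u w)
    (Herm : ∀ u w, P u w = (starRingEnd ℂ) (P w u))
    (psd : ∀ u, T u → 0 ≤ (P u u).re)
    (x v : Fin n → ℂ) (hx : T x) (hv : T v) (hxx : P x x = 0) : P v x = 0 := by
  have Padd2 : ∀ u v w, P u (v + w) = P u v + P u w := by
    intro u v w
    rw [Herm u (v + w), Padd1, map_add, ← Herm, ← Herm]
  have Psmul2 : ∀ (c : ℂ) u w, P u (c • w) = (starRingEnd ℂ) c * P u w := by
    intro c u w
    rw [Herm u (c • w), Psmul1, map_mul, ← Herm]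
  obtain ⟨q, hq⟩ : ∃ q, P v x = q := ⟨_, rfl⟩
  obtain ⟨W, hWeq⟩ : ∃ W, (P v v).re = W := ⟨_, rfl⟩
  rw [hq]
  have hW0 : 0 ≤ W := hWeq ▸ psd v hv
  by_contra hne
  obtain ⟨t, ht⟩ : ∃ t : ℝ, t = 1 / (W + 1) := ⟨_, rfl⟩
  have htpos : 0 < t := by rw [ht]; positivity
  obtain ⟨c, hc⟩ : ∃ c : ℂ, c = -(t : ℂ) * (starRingEnd ℂ) q := ⟨_, rfl⟩
  have key : 0 ≤ (P (x + c • v) (x + c • v)).re := psd _ (Tadd _ _ hx (Tsmul _ _ hv))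
  have hexp : P (x + c • v) (x + c • v)
      = P x x + (starRingEnd ℂ) c * P x v + c * P v x + c * (starRingEnd ℂ) c * P v v := by
    rw [Padd1, Padd2, Padd2, Psmul1, Psmul1, Psmul2, Psmul2]
    ring
  have hxv : P x v = (starRingEnd ℂ) q := by rw [Herm x v, hq]
  have hcc : (starRingEnd ℂ) c = -(t : ℂ) * q := by
    rw [hc, map_mul, map_neg, Complex.conj_ofReal, Complex.conj_conj]
  have hqq : q * (starRingEnd ℂ) q = (Complex.normSq q : ℂ) := Complex.mul_conj q
  have hexp2 : P (x + c • v) (x + c • v)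
      = -((2 * t * Complex.normSq q : ℝ) : ℂ) + ((t^2 * Complex.normSq q : ℝ) : ℂ) * P v v := by
    rw [hexp, hxx, hxv, hq, hcc, hc]
    calc (0:ℂ) + -(↑t : ℂ) * q * (starRingEnd ℂ) q + -(↑t:ℂ) * (starRingEnd ℂ) q * q
          + -(↑t:ℂ) * (starRingEnd ℂ) q * (-(↑t:ℂ) * q) * P v v
        = -(2 * (t:ℂ)) * (q * (starRingEnd ℂ) q) + (t:ℂ)^2 * (q * (starRingEnd ℂ) q) * P v v := by
          ring
      _ = _ := by rw [hqq]; push_cast; ring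
  have hre : (P (x + c • v) (x + c • v)).re
      = -(2 * t * Complex.normSq q) + t^2 * Complex.normSq q * W := by
    rw [hexp2, ← hWeq]
    simp [Complex.add_re, Complex.ofReal_re, Complex.mul_re, ← Complex.ofReal_pow]
  rw [hre] at key
  have hs : 0 < Complex.normSq q := Complex.normSq_pos.mpr hne
  have htW : t * W < 1 := by
    rw [ht, div_mul_eq_mul_div, div_lt_one (by linarith)]
    linarith
  nlinarith [mul_pos htpos hs, sq_nonneg t]

end AuxLemmas

/-- Let `X_{i}` (`i ∈ Fin (n-1)`, distinguished index `i₀` playing the role of `X₁`)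
be smooth complex tangential `(1,0)` fields diagonalizing the Levi form of the
pseudoconvex hypersurface `S = {ρ = 0}`, spanning the complex tangent space, and let
`M ⊆ S` be a set on which `L(X₁,X̄₁) = 0` while the other diagonal Levi eigenvalues
are positive.  Write `[X₁,X̄₁] = Y − Ȳ + φ(L_n − L̄_n)` with `Y` tangential of type
`(1,0)`, `L_n` the complex normal and `φ ≥ 0` smooth vanishing on `M`.  Then at every
point of `M` where `φ` vanishes to first order, `Y` is a Levi null vector, hence a
multiple of `X₁`. -/
theorem stmt_17 (hn : 2 ≤ n) (U : Set (Fin n → ℂ)) (hU : IsOpen U)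
    (ρ : (Fin n → ℂ) → ℝ) (hρ : ContDiffOn ℝ (⊤ : ℕ∞) ρ U)
    (S : Set (Fin n → ℂ)) (hS : S = {z ∈ U | ρ z = 0})
    (M : Set (Fin n → ℂ)) (hMS : M ⊆ S)
    (X : Fin (n - 1) → (Fin n → ℂ) → (Fin n → ℂ)) (i₀ : Fin (n - 1))
    (hXsmooth : ∀ i, ContDiffOn ℝ (⊤ : ℕ∞) (X i) U)
    (hXtang : ∀ i, ∀ z ∈ S, isTangential ρ (X i) z)
    (hXspan : ∀ z ∈ S, ∀ v : Fin n → ℂ,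
      (∑ j, v j * wirtingerZ (fun u => ((ρ u : ℝ) : ℂ)) j z) = 0 →
        v ∈ Submodule.span ℂ (Set.range fun i => X i z))
    (hdiag : ∀ i k, i ≠ k → ∀ z ∈ S, leviForm ρ (X i) (X k) z = 0)
    (hnull : ∀ z ∈ M, leviForm ρ (X i₀) (X i₀) z = 0)
    (hposOther : ∀ i, i ≠ i₀ → ∀ z ∈ M, 0 < (leviForm ρ (X i) (X i) z).re)
    -- pseudoconvexity: the Levi form is positive semidefinite on complex tangent vectors
    (hpsc : ∀ z ∈ S, ∀ v : Fin n → ℂ,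
      (∑ j, v j * wirtingerZ (fun u => ((ρ u : ℝ) : ℂ)) j z) = 0 →
        0 ≤ (leviForm ρ (fun _ => v) (fun _ => v) z).re)
    (Y Ln : (Fin n → ℂ) → (Fin n → ℂ))
    (hY : ContDiffOn ℝ (⊤ : ℕ∞) Y U) (hLn : ContDiffOn ℝ (⊤ : ℕ∞) Ln U)
    (hYtang : ∀ z ∈ S, isTangential ρ Y z)
    (hLnNormal : ∀ z ∈ S, ∑ j, Ln z j * wirtingerZ (fun u => ((ρ u : ℝ) : ℂ)) j z = 1)
    (φ : (Fin n → ℂ) → ℝ) (hφ : ContDiffOn ℝ (⊤ : ℕ∞) φ U)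
    (hφpos : ∀ z ∈ S, 0 ≤ φ z) (hφM : ∀ z ∈ M, φ z = 0)
    -- the decomposition `[X₁, X̄₁] = Y − Ȳ + φ(L_n − L̄_n)` on `S`:
    (hdecomp : ∀ z ∈ S, vfBracket (oneZero (X i₀)) (zeroOne (X i₀)) z =
      (fun j => Y z j + (φ z : ℂ) * Ln z j,
       fun j => -conj (Y z j) - (φ z : ℂ) * conj (Ln z j))) :
    ∀ z ∈ M, fderiv ℝ φ z = 0 →
      (∀ i, leviForm ρ Y (X i) z = 0) ∧
      (leviForm ρ Y Y z = 0) ∧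
      ∃ c : ℂ, Y z = c • X i₀ z := by
  intro z hzM hdφ
  have hzS : z ∈ S := hMS hzM
  have hmemS : ∀ w, w ∈ S → w ∈ U ∧ ρ w = 0 := by
    intro w hw; rw [hS] at hw; exact hw
  have hmemS' : ∀ w, w ∈ U → ρ w = 0 → w ∈ S := by
    intro w h1 h2; rw [hS]; exact ⟨h1, h2⟩
  have hzU : z ∈ U := (hmemS z hzS).1
  have hρz : ρ z = 0 := (hmemS z hzS).2
  have hrcCD : ContDiffOn ℝ (⊤ : ℕ∞) (fun u => ((ρ u : ℝ) : ℂ)) U :=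
    Complex.ofRealCLM.contDiff.comp_contDiffOn hρ
  have tangX : ∀ i, ∀ w ∈ S, dW (fun u => ((ρ u : ℝ) : ℂ)) w (X i w) = 0 := by
    intro i w hw
    rw [← sum_wZ]
    exact hXtang i w hw
  have tangY : ∀ w ∈ S, dW (fun u => ((ρ u : ℝ) : ℂ)) w (Y w) = 0 := by
    intro w hw; rw [← sum_wZ]; exact hYtang w hw
  have hnd : ∀ w ∈ S, fderiv ℝ ρ w ≠ 0 := by
    intro w hw h0
    have hwU := (hmemS w hw).1
    have h1 : dW (fun u => ((ρ u : ℝ) : ℂ)) w (Ln w) = 1 := by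
      rw [← sum_wZ]; exact hLnNormal w hw
    have hrc : fderiv ℝ (fun u => ((ρ u : ℝ) : ℂ)) w
        = Complex.ofRealCLM.comp (fderiv ℝ ρ w) :=
      (Complex.ofRealCLM.hasFDerivAt.comp w (cdAt hU hρ hwU).hasFDerivAt).fderiv
    rw [dW, hrc, h0] at h1
    simp at h1
  have Tlem : ∀ w ∈ S, ∀ (f : (Fin n → ℂ) → ℂ), DifferentiableAt ℝ f w →
      (∀ y ∈ S, f y = 0) → ∀ (av : Fin n → ℂ),
      dW (fun u => ((ρ u : ℝ) : ℂ)) w av = 0 → dW f w av = 0 ∧ dWb f w av = 0 := by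
    intro w hw f hfd hfS av hav
    exact tangential_dW_dWb hU hρ (hmemS w hw).1 (hmemS w hw).2 (hnd w hw) hfd
      (fun y hyU hy0 => hfS y (hmemS' y hyU hy0)) hav
  -- Cauchy-Schwarz machinery at z
  have hQxx : dWb (fun y => dW (fun u => ((ρ u : ℝ) : ℂ)) y (X i₀ z)) z (X i₀ z) = 0 := by
    have h := hnull z hzM
    rwa [leviForm_eq hU hρ hzU (X i₀) (X i₀)] at h
  have Qadd1 : ∀ u v w : Fin n → ℂ,
      dWb (fun y => dW (fun u' => ((ρ u' : ℝ) : ℂ)) y (u + v)) z w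
        = dWb (fun y => dW (fun u' => ((ρ u' : ℝ) : ℂ)) y u) z w
          + dWb (fun y => dW (fun u' => ((ρ u' : ℝ) : ℂ)) y v) z w := by
    intro u v w
    have hfe : (fun y => dW (fun u' => ((ρ u' : ℝ) : ℂ)) y (u + v))
        = fun y => dW (fun u' => ((ρ u' : ℝ) : ℂ)) y u
            + dW (fun u' => ((ρ u' : ℝ) : ℂ)) y v := funext fun y => dW_addV
    rw [hfe, dWb_fun_add (diffAt_dW hU hrcCD hzU (differentiableAt_const u))
      (diffAt_dW hU hrcCD hzU (differentiableAt_const v))]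
  have Qsmul1 : ∀ (c : ℂ) (u w : Fin n → ℂ),
      dWb (fun y => dW (fun u' => ((ρ u' : ℝ) : ℂ)) y (c • u)) z w
        = c * dWb (fun y => dW (fun u' => ((ρ u' : ℝ) : ℂ)) y u) z w := by
    intro c u w
    have hfe : (fun y => dW (fun u' => ((ρ u' : ℝ) : ℂ)) y (c • u))
        = fun y => c * dW (fun u' => ((ρ u' : ℝ) : ℂ)) y u := funext fun y => dW_smulV c
    rw [hfe, dWb_fun_const_mul (diffAt_dW hU hrcCD hzU (differentiableAt_const u)) c]
  have Qpsd : ∀ u : Fin n → ℂ, dW (fun u' => ((ρ u' : ℝ) : ℂ)) z u = 0 →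
      0 ≤ (dWb (fun y => dW (fun u' => ((ρ u' : ℝ) : ℂ)) y u) z u).re := by
    intro u hu
    have h := hpsc z hzS u (by rw [sum_wZ]; exact hu)
    rwa [leviForm_eq hU hρ hzU (fun _ => u) (fun _ => u)] at h
  have CS : ∀ v : Fin n → ℂ, dW (fun u' => ((ρ u' : ℝ) : ℂ)) z v = 0 →
      dWb (fun y => dW (fun u' => ((ρ u' : ℝ) : ℂ)) y v) z (X i₀ z) = 0 := by
    intro v hv
    exact cs_null (fun u w => dWb (fun y => dW (fun u' => ((ρ u' : ℝ) : ℂ)) y u) z w)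
      (fun u => dW (fun u' => ((ρ u' : ℝ) : ℂ)) z u = 0)
      (fun u v h1 h2 => by
        have h1' : dW (fun u' => ((ρ u' : ℝ) : ℂ)) z u = 0 := h1
        have h2' : dW (fun u' => ((ρ u' : ℝ) : ℂ)) z v = 0 := h2
        show dW (fun u' => ((ρ u' : ℝ) : ℂ)) z (u + v) = 0
        rw [dW_addV, h1', h2', add_zero])
      (fun c u h => by
        have h' : dW (fun u' => ((ρ u' : ℝ) : ℂ)) z u = 0 := h
        show dW (fun u' => ((ρ u' : ℝ) : ℂ)) z (c • u) = 0
        rw [dW_smulV, h', mul_zero])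
      Qadd1 Qsmul1 (fun u w => herm hU hρ hzU u w) Qpsd
      (X i₀ z) v (tangX i₀ z hzS) hv hQxx
  -- conclusion 1
  have goal1 : ∀ i, leviForm ρ Y (X i) z = 0 := by
    intro k
    rw [leviForm_eq hU hρ hzU Y (X k)]
    by_cases hk : k = i₀
    · subst hk
      exact CS (Y z) (tangY z hzS)
    · have hXi_d : DifferentiableAt ℝ (X i₀) z := cdAt hU (hXsmooth i₀) hzU
      have hXk_d : DifferentiableAt ℝ (X k) z := cdAt hU (hXsmooth k) hzU
      have hY_d : DifferentiableAt ℝ Y z := cdAt hU hY hzU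
      have hXIj : ∀ j : Fin n, ContDiffOn ℝ (⊤ : ℕ∞) (fun w => X i₀ w j) U := fun j =>
        ((ContinuousLinearMap.proj (R := ℝ) (φ := fun _ : Fin n => ℂ) j).contDiff).comp_contDiffOn
          (hXsmooth i₀)
      -- step E1
      have hE1 : dWb (fun w => dW (fun u => ((ρ u : ℝ) : ℂ)) w (Y w)) z (X k z) = 0 :=
        (Tlem z hzS _ (diffAt_dW hU hrcCD hzU hY_d) (fun y hy => tangY y hy)
          (X k z) (tangX k z hzS)).2
      have hM2Y := master2 hU hzU hrcCD hY_d (X k z)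
      rw [hE1] at hM2Y
      -- step E2
      have hbr : ∀ y ∈ S, ∀ j, Y y j + (φ y : ℂ) * Ln y j
          + dWb (fun v => X i₀ v j) y (X i₀ y) = 0 := by
        intro y hy j
        have h := congrArg (fun p => p.1 j) (hdecomp y hy)
        have hz0 : ∀ (m : Fin n) (y' : Fin n → ℂ),
            wirtingerZ (fun _ : Fin n → ℂ => (0:ℂ)) m y' = 0 := by
          intro m y'; simp [wirtingerZ, fderiv_const]
        simp only [vfBracket, vfAct, oneZero, zeroOne, Pi.zero_apply, hz0, mul_zero, zero_mul,
          Finset.sum_const_zero, add_zero, zero_add, zero_sub] at h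
        rw [sum_wZb] at h
        linear_combination -h
      have hYj_d : ∀ j, DifferentiableAt ℝ (fun w => Y w j) z := fun j =>
        ((ContinuousLinearMap.proj (R := ℝ) (φ := fun _ : Fin n => ℂ) j).differentiableAt).comp
          z hY_d
      have hLnj_d : ∀ j, DifferentiableAt ℝ (fun w => Ln w j) z := fun j =>
        ((ContinuousLinearMap.proj (R := ℝ) (φ := fun _ : Fin n => ℂ) j).differentiableAt).comp
          z (cdAt hU hLn hzU)
      have hcjd : ∀ j, DifferentiableAt ℝ
          (fun w => dWb (fun v => X i₀ v j) w (X i₀ w)) z :=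
        fun j => diffAt_dWb hU (hXIj j) hzU hXi_d
      have hφc_d : DifferentiableAt ℝ (fun w => ((φ w : ℝ) : ℂ)) z :=
        Complex.ofRealCLM.differentiableAt.comp z (cdAt hU hφ hzU)
      have hφz : ((φ z : ℝ) : ℂ) = 0 := by rw [hφM z hzM]; norm_num
      have hφd : dWb (fun w => ((φ w : ℝ) : ℂ)) z (X k z) = 0 :=
        dWb_real_zero (cdAt hU hφ hzU) hdφ _
      have hE2 : ∀ j, dWb (fun w => Y w j) z (X k z)
          = - dWb (fun w => dWb (fun v => X i₀ v j) w (X i₀ w)) z (X k z) := by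
        intro j
        have hFd : DifferentiableAt ℝ (fun w => Y w j + ((φ w : ℝ) : ℂ) * Ln w j
            + dWb (fun v => X i₀ v j) w (X i₀ w)) z :=
          ((hYj_d j).add (hφc_d.mul (hLnj_d j))).add (hcjd j)
        have h0 := (Tlem z hzS _ hFd (fun y hy => hbr y hy j) (X k z) (tangX k z hzS)).2
        rw [dWb_fun_add ((hYj_d j).fun_add (hφc_d.fun_mul (hLnj_d j))) (hcjd j),
            dWb_fun_add (hYj_d j) (hφc_d.fun_mul (hLnj_d j)),
            dWb_fun_mul hφc_d (hLnj_d j)] at h0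
        simp only [hφz, hφd, zero_mul, mul_zero, add_zero, zero_add] at h0
        linear_combination h0
      have hvbY : ((1/2 : ℂ) • fderiv ℝ Y z (X k z)
            + (Complex.I/2) • fderiv ℝ Y z (Complex.I • X k z))
          = fun j => dWb (fun w => Y w j) z (X k z) :=
        funext fun j => (dWb_comp_proj hY_d (X k z) j).symm
      rw [hvbY] at hM2Y
      have hveq : (fun j => dWb (fun w => Y w j) z (X k z))
          = - fun j => dWb (fun w => dWb (fun v => X i₀ v j) w (X i₀ w)) z (X k z) := by
        funext j
        rw [Pi.neg_apply, hE2 j]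
      rw [hveq, dW_negV] at hM2Y
      -- step E3
      obtain ⟨e, he⟩ : ∃ e : Fin n → ℂ, e
          = ((1/2 : ℂ) • fderiv ℝ (X i₀) z (X k z)
              - (Complex.I/2) • fderiv ℝ (X i₀) z (Complex.I • X k z))
            - ((1/2 : ℂ) • fderiv ℝ (X k) z (X i₀ z)
              - (Complex.I/2) • fderiv ℝ (X k) z (Complex.I • X i₀ z)) := ⟨_, rfl⟩
      have hPvecj : ∀ j, dWb (fun w => dWb (fun v => X i₀ v j) w (X i₀ w)) z (X k z)
          = dWb (fun w => dWb (fun v => X i₀ v j) w (X k w)) z (X i₀ z)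
            + dWb (fun v => X i₀ v j) z e := by
        intro j
        have hM3a := master3 hU hzU (hXIj j) hXi_d (X k z)
        have hM3b := master3 hU hzU (hXIj j) hXk_d (X i₀ z)
        have hsym := dWb_dWb_symm hU (hXIj j) hzU (X k z) (X i₀ z)
        rw [he, dWb_subV]
        linear_combination hM3a - hM3b + hsym
      have hPsplit : (fun j => dWb (fun w => dWb (fun v => X i₀ v j) w (X i₀ w)) z (X k z))
          = (fun j => dWb (fun w => dWb (fun v => X i₀ v j) w (X k w)) z (X i₀ z))
            + (fun j => dWb (fun v => X i₀ v j) z e) := by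
        funext j
        rw [Pi.add_apply, hPvecj j]
      rw [hPsplit, dW_addV] at hM2Y
      -- step E4 : the vector e is complex tangent, and the P_b term vanishes
      have hM1a := master1 hU hzU hrcCD hXi_d (X k z)
      have hM1b := master1 hU hzU hrcCD hXk_d (X i₀ z)
      have h0gXa : dW (fun w => dW (fun u => ((ρ u : ℝ) : ℂ)) w (X i₀ w)) z (X k z) = 0 :=
        (Tlem z hzS _ (diffAt_dW hU hrcCD hzU hXi_d) (fun y hy => tangX i₀ y hy)
          (X k z) (tangX k z hzS)).1
      have h0gKx : dW (fun w => dW (fun u => ((ρ u : ℝ) : ℂ)) w (X k w)) z (X i₀ z) = 0 :=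
        (Tlem z hzS _ (diffAt_dW hU hrcCD hzU hXk_d) (fun y hy => tangX k y hy)
          (X i₀ z) (tangX i₀ z hzS)).1
      rw [h0gXa] at hM1a
      rw [h0gKx] at hM1b
      have hsymZ := dW_dW_symm hU hrcCD hzU (X k z) (X i₀ z)
      have h_e_tang : dW (fun u => ((ρ u : ℝ) : ℂ)) z e = 0 := by
        rw [he, dW_subV]
        linear_combination - hM1a + hM1b - hsymZ
      have hM2e := master2 hU hzU hrcCD hXi_d e
      have h0gXe : dWb (fun w => dW (fun u => ((ρ u : ℝ) : ℂ)) w (X i₀ w)) z e = 0 :=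
        (Tlem z hzS _ (diffAt_dW hU hrcCD hzU hXi_d) (fun y hy => tangX i₀ y hy) e h_e_tang).2
      rw [h0gXe] at hM2e
      have hQex : dWb (fun y => dW (fun u => ((ρ u : ℝ) : ℂ)) y e) z (X i₀ z) = 0 :=
        CS e h_e_tang
      have hQxe : dWb (fun y => dW (fun u => ((ρ u : ℝ) : ℂ)) y (X i₀ z)) z e = 0 := by
        rw [herm hU hρ hzU (X i₀ z) e, hQex, map_zero]
      have hPb : dW (fun u => ((ρ u : ℝ) : ℂ)) z
          ((1/2 : ℂ) • fderiv ℝ (X i₀) z e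
            + (Complex.I/2) • fderiv ℝ (X i₀) z (Complex.I • e)) = 0 := by
        linear_combination - hM2e - hQxe
      have hV2 : (fun j => dWb (fun v => X i₀ v j) z e)
          = ((1/2 : ℂ) • fderiv ℝ (X i₀) z e
            + (Complex.I/2) • fderiv ℝ (X i₀) z (Complex.I • e)) :=
        funext fun j => dWb_comp_proj hXi_d e j
      rw [hV2] at hM2Y
      -- step E5 : the P_a term vanishes
      have hdjd : ∀ j, DifferentiableAt ℝ (fun w => dWb (fun v => X i₀ v j) w (X k w)) z :=
        fun j => diffAt_dWb hU (hXIj j) hzU hXk_d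
      have hDd : DifferentiableAt ℝ
          (fun w => (fun j => dWb (fun v => X i₀ v j) w (X k w))) z := by
        rw [differentiableAt_pi]
        exact fun j => hdjd j
      have hκv : ∀ w ∈ S, dW (fun u => ((ρ u : ℝ) : ℂ)) w
          (fun j => dWb (fun v => X i₀ v j) w (X k w)) = 0 := by
        intro w hw
        have hwU := (hmemS w hw).1
        have hXid_w : DifferentiableAt ℝ (X i₀) w := cdAt hU (hXsmooth i₀) hwU
        have hM2w := master2 hU hwU hrcCD hXid_w (X k w)
        have h1 : dWb (fun y => dW (fun u => ((ρ u : ℝ) : ℂ)) y (X i₀ y)) w (X k w) = 0 :=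
          (Tlem w hw _ (diffAt_dW hU hrcCD hwU hXid_w) (fun y hy => tangX i₀ y hy)
            (X k w) (tangX k w hw)).2
        have h2 : dWb (fun y => dW (fun u => ((ρ u : ℝ) : ℂ)) y (X i₀ w)) w (X k w) = 0 := by
          have h := hdiag i₀ k (fun hh => hk hh.symm) w hw
          rwa [leviForm_eq hU hρ hwU (X i₀) (X k)] at h
        have h3 : ((1/2 : ℂ) • fderiv ℝ (X i₀) w (X k w)
              + (Complex.I/2) • fderiv ℝ (X i₀) w (Complex.I • X k w))
            = fun j => dWb (fun v => X i₀ v j) w (X k w) :=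
          funext fun j => (dWb_comp_proj hXid_w (X k w) j).symm
        rw [h1, h2, h3] at hM2w
        linear_combination - hM2w
      have hκd : DifferentiableAt ℝ (fun w => dW (fun u => ((ρ u : ℝ) : ℂ)) w
          (fun j => dWb (fun v => X i₀ v j) w (X k w))) z :=
        diffAt_dW hU hrcCD hzU hDd
      have hM2D := master2 hU hzU hrcCD hDd (X i₀ z)
      have hκ0 : dWb (fun w => dW (fun u => ((ρ u : ℝ) : ℂ)) w
          (fun j => dWb (fun v => X i₀ v j) w (X k w))) z (X i₀ z) = 0 :=
        (Tlem z hzS _ hκd (fun y hy => hκv y hy) (X i₀ z) (tangX i₀ z hzS)).2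
      rw [hκ0] at hM2D
      have hQDx : dWb (fun y => dW (fun u => ((ρ u : ℝ) : ℂ)) y
          (fun j => dWb (fun v => X i₀ v j) z (X k z))) z (X i₀ z) = 0 :=
        CS _ (hκv z hzS)
      have hbrD : ((1/2 : ℂ) • fderiv ℝ
            (fun w => (fun j => dWb (fun v => X i₀ v j) w (X k w))) z (X i₀ z)
          + (Complex.I/2) • fderiv ℝ
            (fun w => (fun j => dWb (fun v => X i₀ v j) w (X k w))) z (Complex.I • X i₀ z))
          = fun j => dWb (fun w => dWb (fun v => X i₀ v j) w (X k w)) z (X i₀ z) :=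
        funext fun j => (dWb_comp_proj hDd (X i₀ z) j).symm
      rw [hbrD] at hM2D
      have hPa : dW (fun u => ((ρ u : ℝ) : ℂ)) z
          (fun j => dWb (fun w => dWb (fun v => X i₀ v j) w (X k w)) z (X i₀ z)) = 0 := by
        linear_combination - hM2D - hQDx
      linear_combination - hM2Y + hPa + hPb
  -- conclusions 2 and 3
  have hYmem := hXspan z hzS (Y z) (by rw [sum_wZ]; exact tangY z hzS)
  rw [Submodule.mem_span_range_iff_exists_fun] at hYmem
  obtain ⟨c, hc⟩ := hYmem
  have hQsum : ∀ u : Fin n → ℂ,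
      dWb (fun y => dW (fun u' => ((ρ u' : ℝ) : ℂ)) y u) z (Y z)
        = ∑ i, (starRingEnd ℂ) (c i)
            * dWb (fun y => dW (fun u' => ((ρ u' : ℝ) : ℂ)) y u) z (X i z) := by
    intro u
    rw [← hc, dWb_sumV]
    refine Finset.sum_congr rfl fun i _ => dWb_smulV (c i)
  have goal2 : leviForm ρ Y Y z = 0 := by
    rw [leviForm_eq hU hρ hzU Y Y, hQsum (Y z)]
    refine Finset.sum_eq_zero fun i _ => ?_
    have h := goal1 i
    rw [leviForm_eq hU hρ hzU Y (X i)] at h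
    rw [h, mul_zero]
  have hci : ∀ i, i ≠ i₀ → c i = 0 := by
    intro i hi
    have h := goal1 i
    rw [leviForm_eq hU hρ hzU Y (X i)] at h
    have hexp : dWb (fun y => dW (fun u' => ((ρ u' : ℝ) : ℂ)) y (Y z)) z (X i z)
        = ∑ m, c m * dWb (fun y => dW (fun u' => ((ρ u' : ℝ) : ℂ)) y (X m z)) z (X i z) := by
      rw [herm hU hρ hzU (Y z) (X i z), hQsum (X i z), map_sum]
      refine Finset.sum_congr rfl fun m _ => ?_
      rw [map_mul, Complex.conj_conj, ← herm hU hρ hzU (X m z) (X i z)]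
    rw [hexp] at h
    have hdg : ∀ m, m ≠ i →
        dWb (fun y => dW (fun u' => ((ρ u' : ℝ) : ℂ)) y (X m z)) z (X i z) = 0 := by
      intro m hm
      have h2 := hdiag m i hm z hzS
      rwa [leviForm_eq hU hρ hzU (X m) (X i)] at h2
    rw [Finset.sum_eq_single i (fun m _ hm => by rw [hdg m hm, mul_zero]) (by simp)] at h
    have hpos := hposOther i hi z hzM
    rw [leviForm_eq hU hρ hzU (X i) (X i)] at hpos
    rcases mul_eq_zero.mp h with h' | h'
    · exact h'
    · rw [h'] at hpos
      simp at hpos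
  refine ⟨goal1, goal2, c i₀, ?_⟩
  rw [← hc, Finset.sum_eq_single i₀ (fun m _ hm => by rw [hci m hm, zero_smul]) (by simp)]
end
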